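/- arXiv:1205.5156 — 4 statements merged into one kernel-verified Lean document; each statement's English description precedes it below -/
import Mathlib

section
/- If K is a real closed field, M and N are both integer parts of K, then the map sending each element m of M to the unique n in N with n ≤ m < n+1 is an order isomorphism from (M, <) onto (N, <). -/
open FirstOrder Language

/-- A real closed ordered field: every nonnegative element is a square and every
polynomial of odd degree has a root. -/
def IsRealClosedOrdField (K : Type*) [Field K] [LinearOrder K] [IsStrictOrderedRing K] : Prop :=
  (∀ x : K, 0 ≤ x → ∃ y : K, y ^ 2 = x) ∧
    ∀ p : Polynomial K, Odd p.natDegree → ∃ x : K, p.eval x = 0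

/-- `M` is an integer part of the ordered field `K`: it is discretely ordered and every
element of `K` lies within distance one above an element of `M`. -/
def IsIntegerPart {K : Type*} [Field K] [LinearOrder K] [IsStrictOrderedRing K] (M : Subring K) : Prop :=
  (∀ m ∈ M, ¬(0 < m ∧ m < 1)) ∧ ∀ x : K, ∃ m ∈ M, m ≤ x ∧ x < m + 1

/-- `x` is a finite element of the ordered field `K`. -/
def FiniteElt {K : Type*} [Field K] [LinearOrder K] [IsStrictOrderedRing K] (x : K) : Prop := ∃ n : ℕ, |x| ≤ n

/-- `vle x y` says `v x ≤ v y` for the standard valuation `v` (i.e. `y / x` is finite). -/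
def vle {K : Type*} [Field K] [LinearOrder K] [IsStrictOrderedRing K] (x y : K) : Prop := FiniteElt (y / x)

/-- `vlt x y` says `v x < v y` for the standard valuation. -/
def vlt {K : Type*} [Field K] [LinearOrder K] [IsStrictOrderedRing K] (x y : K) : Prop := vle x y ∧ ¬ vle y x

/-- `veq x y` says `v x = v y` for the standard valuation. -/
def veq {K : Type*} [Field K] [LinearOrder K] [IsStrictOrderedRing K] (x y : K) : Prop := vle x y ∧ vle y x

/-- `x` is algebraic over the subring `M` of `K`. -/
def AlgebraicOver {K : Type*} [Field K] [LinearOrder K] [IsStrictOrderedRing K] (M : Subring K) (x : K) : Prop :=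
  ∃ p : Polynomial K, p ≠ 0 ∧ (∀ i, p.coeff i ∈ M) ∧ p.eval x = 0

section

variable {K : Type*} [Field K] [LinearOrder K] [IsStrictOrderedRing K] {M N : Subring K}

theorem Subring.add_one_le_of_lt (hM : ∀ m ∈ M, ¬(0 < m ∧ m < 1)) {a b : K} (ha : a ∈ M)
    (hb : b ∈ M) (hab : a < b) : a + 1 ≤ b := by
  by_contra! hlt
  exact hM (b - a) (M.sub_mem hb ha) ⟨sub_pos.2 hab, by linarith⟩

theorem Subring.eq_of_le_of_lt_add_one (hM : ∀ m ∈ M, ¬(0 < m ∧ m < 1)) {x a b : K}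
    (ha : a ∈ M) (hb : b ∈ M) (hax : a ≤ x) (hxa : x < a + 1) (hbx : b ≤ x) (hxb : x < b + 1) :
    a = b :=
  le_antisymm
    (not_lt.1 fun h => (Subring.add_one_le_of_lt hM hb ha h).not_gt (hax.trans_lt hxb))
    (not_lt.1 fun h => (Subring.add_one_le_of_lt hM ha hb h).not_gt (hbx.trans_lt hxa))

namespace IsIntegerPart

noncomputable def floor (hN : IsIntegerPart N) (x : K) : N :=
  ⟨(hN.2 x).choose, (hN.2 x).choose_spec.1⟩

theorem floor_le (hN : IsIntegerPart N) (x : K) : (hN.floor x : K) ≤ x :=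
  (hN.2 x).choose_spec.2.1

theorem lt_floor_add_one (hN : IsIntegerPart N) (x : K) : x < hN.floor x + 1 :=
  (hN.2 x).choose_spec.2.2

theorem eq_floor (hN : IsIntegerPart N) {x : K} (n : N) (hnx : (n : K) ≤ x) (hxn : x < n + 1) :
    n = hN.floor x :=
  Subtype.ext <| Subring.eq_of_le_of_lt_add_one hN.1 n.2 (hN.floor x).2 hnx hxn
    (hN.floor_le x) (hN.lt_floor_add_one x)

theorem strictMono_floor_comp (hM : ∀ m ∈ M, ¬(0 < m ∧ m < 1)) (hN : IsIntegerPart N) :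
    StrictMono fun m : M => hN.floor m := by
  intro a b hab
  have hab' : (a : K) + 1 ≤ b := Subring.add_one_le_of_lt hM a.2 b.2 hab
  show (hN.floor a : K) < hN.floor b
  linarith [hN.floor_le a, hN.lt_floor_add_one b, hN.lt_floor_add_one a, hN.floor_le b]

/-- For `n ∈ N`, `n` is the `N`-floor of `⌊n⌋_M` or of `⌊n⌋_M + 1`. -/
theorem surjective_floor_comp (hM : IsIntegerPart M) (hN : IsIntegerPart N) :
    Function.Surjective fun m : M => hN.floor m := by
  intro n
  set m := hM.floor n
  have hmn := hM.floor_le n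
  have hnm := hM.lt_floor_add_one n
  by_cases h : (n : K) ≤ m
  · exact ⟨m, (hN.eq_floor n h (by linarith)).symm⟩
  · refine ⟨m + 1, (hN.eq_floor n ?_ ?_).symm⟩ <;> push_cast <;> linarith

end IsIntegerPart

end

theorem stmt0_general {K : Type*} [Field K] [LinearOrder K] [IsStrictOrderedRing K]
    (M N : Subring K) (hM : IsIntegerPart M) (hN : IsIntegerPart N) :
    ∃ f : M ≃o N, ∀ m : M,
      ((f m : K) ≤ (m : K) ∧ (m : K) < (f m : K) + 1) ∧
      ∀ n : N, ((n : K) ≤ (m : K) ∧ (m : K) < (n : K) + 1) → n = f m :=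
  ⟨StrictMono.orderIsoOfSurjective _ (IsIntegerPart.strictMono_floor_comp hM.1 hN)
      (IsIntegerPart.surjective_floor_comp hM hN),
    fun m => ⟨⟨hN.floor_le m, hN.lt_floor_add_one m⟩, fun n hn => hN.eq_floor n hn.1 hn.2⟩⟩

/-- If K is a real closed field and M, N are integer parts of K, then the map sending
each m ∈ M to the unique n ∈ N with n ≤ m < n + 1 is an order isomorphism (M,<) ≅ (N,<). -/
theorem stmt0 {K : Type*} [Field K] [LinearOrder K] [IsStrictOrderedRing K] (hK : IsRealClosedOrdField K)
    (M N : Subring K) (hM : IsIntegerPart M) (hN : IsIntegerPart N) :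
    ∃ f : M ≃o N, ∀ m : M,
      ((f m : K) ≤ (m : K) ∧ (m : K) < (f m : K) + 1) ∧
      ∀ n : N, ((n : K) ≤ (m : K) ∧ (m : K) < (n : K) + 1) → n = f m :=
  stmt0_general M N hM hN
end

section
/- Let G ⊆ H be divisible ordered abelian groups with G convex in H and H/G nontrivial and finite dimensional over Q. Then there exists h in H such that every element of H is bounded above by m·h for some natural number m. -/
/-!
A positive element `h₀` outside the convex subgroup `G` bounds all of `G` from above.
If `s₁, …, s_k` span `H/G` rationally, every `x` has a positive multiple `n • x` that
differs from an integer combination `∑ cᵢ • sᵢ` by an element of `G`, so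
`n • x ≤ (∑ |cᵢ|) • ∑ |sᵢ| + h₀`, and `h = ∑ |sᵢ| + h₀` works.
-/

section OrderedGroup

variable {α : Type*} [AddCommGroup α] [LinearOrder α] [IsOrderedAddMonoid α]

theorem zsmul_le_natAbs_nsmul_abs (c : ℤ) (a : α) : c • a ≤ c.natAbs • |a| :=
  calc c • a ≤ |c • a| := le_abs_self _
    _ = c.natAbs • |a| := by rw [abs_zsmul, Int.abs_eq_natAbs, natCast_zsmul]

theorem sum_zsmul_le_nsmul_sum_abs {ι : Type*} [Fintype ι] (c : ι → ℤ) (s : ι → α) :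
    ∑ i, c i • s i ≤ (∑ j, (c j).natAbs) • ∑ i, |s i| := by
  rw [Finset.smul_sum]
  refine Finset.sum_le_sum fun i _ => (zsmul_le_natAbs_nsmul_abs (c i) (s i)).trans ?_
  exact nsmul_le_nsmul_left (abs_nonneg _) <|
    Finset.single_le_sum (f := fun j => (c j).natAbs) (fun j _ => Nat.zero_le _)
      (Finset.mem_univ i)

theorem le_of_nsmul_le {n : ℕ} {x y : α} (hn : 0 < n) (hy : 0 ≤ y) (h : n • x ≤ y) :
    x ≤ y := by
  rcases le_or_gt x 0 with hx | hx
  · exact hx.trans hy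
  · exact (le_self_nsmul hx.le hn.ne').trans h

theorem AddSubgroup.exists_pos_forall_le_of_ne_univ (G : AddSubgroup α)
    (hconv : ∀ a ∈ G, ∀ b ∈ G, ∀ x : α, a ≤ x → x ≤ b → x ∈ G)
    (hG : (G : Set α) ≠ Set.univ) :
    ∃ h₀ : α, 0 < h₀ ∧ ∀ g ∈ G, g ≤ h₀ := by
  obtain ⟨a, ha⟩ : ∃ a, a ∉ G := by
    by_contra! h
    exact hG (Set.eq_univ_of_forall h)
  have habs : |a| ∉ G := fun h => ha ((abs_mem_iff (S := AddSubgroup α)).mp h)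
  refine ⟨|a|, lt_of_le_of_ne (abs_nonneg a) fun h => habs (h ▸ G.zero_mem), fun g hg => ?_⟩
  by_contra! hlt
  exact habs (hconv 0 G.zero_mem g hg |a| (abs_nonneg a) hlt.le)

end OrderedGroup

theorem stmt3_general {H : Type*} [AddCommGroup H] [LinearOrder H] [IsOrderedAddMonoid H] (G : AddSubgroup H)
    (hconv : ∀ a ∈ G, ∀ b ∈ G, ∀ x : H, a ≤ x → x ≤ b → x ∈ G)
    (hnontriv : (G : Set H) ≠ Set.univ)
    (hfindim : ∃ (k : ℕ) (s : Fin k → H), ∀ x : H, ∃ n : ℕ, 0 < n ∧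
      ∃ c : Fin k → ℤ, (n : ℤ) • x - ∑ i, c i • s i ∈ G) :
    ∃ h : H, ∀ x : H, ∃ m : ℕ, x ≤ m • h := by
  obtain ⟨k, s, hs⟩ := hfindim
  obtain ⟨h₀, h₀_pos, hG_le⟩ := G.exists_pos_forall_le_of_ne_univ hconv hnontriv
  set T := ∑ i, |s i|
  have hT : 0 ≤ T := Finset.sum_nonneg fun i _ => abs_nonneg (s i)
  refine ⟨T + h₀, fun x => ?_⟩
  obtain ⟨n, hn, c, hc⟩ := hs x
  set M := ∑ j, (c j).natAbs
  refine ⟨M + 1, le_of_nsmul_le hn (nsmul_nonneg (add_nonneg hT h₀_pos.le) _) ?_⟩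
  calc n • x = ((n : ℤ) • x - ∑ i, c i • s i) + ∑ i, c i • s i := by
        rw [natCast_zsmul, sub_add_cancel]
    _ ≤ h₀ + M • T := add_le_add (hG_le _ hc) (sum_zsmul_le_nsmul_sum_abs c s)
    _ ≤ (M + 1) • (T + h₀) := by
        rw [smul_add, add_comm h₀]
        exact add_le_add (nsmul_le_nsmul_left hT M.le_succ)
          (le_self_nsmul h₀_pos.le M.succ_ne_zero)

/-- Let G ⊆ H be divisible ordered abelian groups with G convex in H and H/G nontrivial
and finite dimensional over ℚ. Then there is h ∈ H such that every element of H is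
bounded above by m • h for some natural number m. -/
theorem stmt3 {H : Type*} [AddCommGroup H] [LinearOrder H] [IsOrderedAddMonoid H] (G : AddSubgroup H)
    (hHdiv : ∀ x : H, ∀ n : ℕ, 0 < n → ∃ y : H, n • y = x)
    (hGdiv : ∀ x ∈ G, ∀ n : ℕ, 0 < n → ∃ y ∈ G, n • y = x)
    (hconv : ∀ a ∈ G, ∀ b ∈ G, ∀ x : H, a ≤ x → x ≤ b → x ∈ G)
    (hnontriv : (G : Set H) ≠ Set.univ)
    (hfindim : ∃ (k : ℕ) (s : Fin k → H), ∀ x : H, ∃ n : ℕ, 0 < n ∧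
      ∃ c : Fin k → ℤ, (n : ℤ) • x - ∑ i, c i • s i ∈ G) :
    ∃ h : H, ∀ x : H, ∃ m : ℕ, x ≤ m • h :=
  stmt3_general G hconv hnontriv hfindim
end

section
/- Let G be a linearly ordered abelian group, k an ordered field, and let μ be the set of elements of k((G)) with strictly positive valuation (the infinitesimals). If k has characteristic 0, then the map E₀: μ → 1+μ defined by E₀(ε) = Σ_{n≥0} εⁿ/n! is a bijection satisfying E₀(x+y) = E₀(x)·E₀(y), with inverse l(1+ε) = Σ_{n≥1} (-1)^{n+1} εⁿ/n. -/
/-!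
Evaluation of formal power series at an infinitesimal `ε` (`PowerSeries.heval ε`) is an algebra
map, and it is compatible with substitution: `heval ε (f.subst g) = heval (heval ε g) f` when
`g(0) = 0`. Indeed only finitely many `εⁿ` have a nonzero coefficient at a given `γ`, so at `γ`
both sides may be computed with a truncation of `f`, where the identity is polynomial. The formal
identities `log ∘ (exp - 1) = X` and `exp ∘ log = 1 + X`, proved by comparing derivatives, then
make `E₀` and `l` mutually inverse. The functional equation is the binomial theorem, after
regrouping the double sum `Σ xⁱ/i! · yʲ/j!` along antidiagonals.
-/

open Finset

theorem finsum_sum_antidiagonal {M A : Type*} [AddCommMonoid M] [AddMonoid A] [HasAntidiagonal A]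
    {f : A × A → M} (hf : (Function.support f).Finite) :
    ∑ᶠ n, ∑ p ∈ antidiagonal n, f p = ∑ᶠ p, f p := by
  classical
  set S := hf.toFinset
  have hfiber (n : A) : ∑ p ∈ antidiagonal n, f p = ∑ p ∈ S with p.1 + p.2 = n, f p := by
    refine (sum_subset (fun p hp ↦ HasAntidiagonal.mem_antidiagonal.mpr (mem_filter.mp hp).2)
      fun p hp hpS ↦ ?_).symm
    by_contra h
    exact hpS (mem_filter.mpr ⟨hf.mem_toFinset.mpr h, HasAntidiagonal.mem_antidiagonal.mp hp⟩)
  rw [finsum_eq_sum_of_support_subset (s := S.image fun p ↦ p.1 + p.2),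
    finsum_eq_sum_of_support_subset (s := S) _ (by simp [S])]
  · simp_rw [hfiber]
    exact sum_fiberwise_of_maps_to (fun p hp ↦ mem_image_of_mem _ hp) f
  · intro n hn
    rw [Function.mem_support, hfiber] at hn
    obtain ⟨p, hp, -⟩ := exists_ne_zero_of_sum_ne_zero hn
    exact mem_image.mpr ⟨p, (mem_filter.mp hp).1, (mem_filter.mp hp).2⟩

namespace PowerSeries

variable {A : Type*} [CommRing A]

theorem coeff_pow_eq_zero_of_lt {g : PowerSeries A} (hg : constantCoeff g = 0) {n d : ℕ}
    (h : n < d) : coeff n (g ^ d) = 0 :=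
  X_pow_dvd_iff.mp (pow_dvd_pow_of_dvd (X_dvd_iff.mpr hg) d) n h

theorem coeff_subst_coe_trunc_of_lt {g : PowerSeries A} (hg : constantCoeff g = 0)
    (f : PowerSeries A) {n B : ℕ} (hn : n < B) :
    coeff n ((trunc B f : PowerSeries A).subst g) = coeff n (f.subst g) := by
  have hs := HasSubst.of_constantCoeff_zero' hg
  rw [coeff_subst' hs, coeff_subst' hs]
  refine finsum_congr fun d ↦ ?_
  rcases lt_or_ge d B with hd | hd
  · rw [coeff_coe_trunc_of_lt hd]
  · rw [coeff_pow_eq_zero_of_lt hg (hn.trans_le hd), smul_zero, smul_zero]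

variable [Algebra ℚ A]

theorem derivative_log_mul_one_add_X : d⁄dX A (log A) * (1 + X) = 1 := by
  ext (_ | n)
  · simp [deriv_log]
  · simp [deriv_log, mul_add, coeff_succ_mul_X, pow_succ]

theorem log_subst_exp_sub_one : (log A).subst (exp A - 1) = X := by
  have := IsAddTorsionFree.of_module_rat A
  have he : constantCoeff (exp A - 1) = 0 := by simp [constantCoeff_exp]
  have hs := HasSubst.of_constantCoeff_zero' he
  refine derivative.ext ?_ ?_
  · have h := congrArg (subst (exp A - 1)) (derivative_log_mul_one_add_X (A := A))
    rw [← coe_substAlgHom hs, map_mul, map_add, map_one, coe_substAlgHom hs, subst_X hs,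
      add_sub_cancel] at h
    rw [derivative_subst hs, map_sub, derivative_exp, derivative_one, sub_zero, derivative_X, h]
  · rw [constantCoeff_X]
    exact constantCoeff_subst_eq_zero he _ constantCoeff_log

theorem exp_subst_log : (exp A).subst (log A) = 1 + X := by
  have := IsAddTorsionFree.of_module_rat A
  have hs := HasSubst.log (A := A)
  set f : PowerSeries A := (exp A).subst (log A)
  set D := d⁄dX A (log A)
  have hD : D * (1 + X) = 1 := derivative_log_mul_one_add_X
  have hf : d⁄dX A f = f * D := by rw [derivative_subst hs, derivative_exp]
  have hD' : d⁄dX A D = -D ^ 2 := by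
    have h := congrArg (d⁄dX A) hD
    rw [Derivation.leibniz, map_add, derivative_X, derivative_one, zero_add, smul_eq_mul,
      smul_eq_mul, mul_one] at h
    linear_combination (-d⁄dX A D) * hD + D * h
  -- `D = 1 / (1 + X)`, and `f / (1 + X)` has derivative `f D² + f D' = 0`
  have hfD : f * D = 1 := by
    refine derivative.ext ?_ ?_
    · rw [Derivation.leibniz, hf, hD', Derivation.map_one_eq_zero, smul_eq_mul, smul_eq_mul]
      ring
    · have hf0 : constantCoeff f = 1 := by
        have h := constantCoeff_subst_eq_zero (constantCoeff_log (A := A)) (exp A - 1)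
          (by simp [constantCoeff_exp])
        rw [← coe_substAlgHom hs, map_sub, map_one, coe_substAlgHom hs] at h
        exact sub_eq_zero.mp h
      have hD0 : constantCoeff D = 1 := by simp [D, deriv_log, ← coeff_zero_eq_constantCoeff_apply]
      rw [map_mul, hf0, hD0, mul_one, map_one]
  calc f = f * (D * (1 + X)) := by rw [hD, mul_one]
    _ = 1 + X := by rw [← mul_assoc, hfD, one_mul]

end PowerSeries

namespace HahnSeries

theorem zero_lt_orderTop_iff_eq_zero_or {Γ R : Type*} [Zero Γ] [LinearOrder Γ] [Zero R]
    {x : R⟦Γ⟧} : 0 < x.orderTop ↔ x = 0 ∨ 0 < x.order := by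
  rcases eq_or_ne x 0 with rfl | hx
  · simp
  · simp [zero_lt_orderTop_iff hx, hx]

theorem SummableFamily.hsum_eq_of_apply_eq_sum_antidiagonal {Γ R A : Type*} [PartialOrder Γ]
    [AddCommMonoid R] [AddMonoid A] [HasAntidiagonal A] {s : SummableFamily Γ R (A × A)}
    {t : SummableFamily Γ R A} (h : ∀ n, t n = ∑ p ∈ antidiagonal n, s p) : t.hsum = s.hsum := by
  ext g
  simp only [coeff_hsum, h, coeff_sum]
  exact finsum_sum_antidiagonal (s.finite_co_support g)

open PowerSeries SummableFamily

variable {Γ R : Type*} [AddCommMonoid Γ] [LinearOrder Γ] [IsOrderedCancelAddMonoid Γ] [CommRing R]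
  {x y : R⟦Γ⟧}

theorem exists_coeff_pow_eq_zero (hx : 0 < x.orderTop) (g : Γ) :
    ∃ B : ℕ, ∀ n, B ≤ n → (x ^ n).coeff g = 0 := by
  obtain ⟨B, hB⟩ := (pow_finite_co_support hx g).bddAbove
  exact ⟨B + 1, fun n hn ↦ by_contra fun h ↦ (hB h).not_gt hn⟩

theorem coeff_heval_eq_of_coeff_eq (hx : 0 < x.orderTop) {g : Γ} {B : ℕ}
    (hB : ∀ n, B ≤ n → (x ^ n).coeff g = 0) {f₁ f₂ : PowerSeries R}
    (hf : ∀ n < B, PowerSeries.coeff n f₁ = PowerSeries.coeff n f₂) :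
    (heval x f₁).coeff g = (heval x f₂).coeff g := by
  rw [heval_apply, heval_apply, coeff_hsum, coeff_hsum]
  refine finsum_congr fun n ↦ ?_
  rw [powerSeriesFamily_of_orderTop_pos hx, powerSeriesFamily_of_orderTop_pos hx, coeff_smul,
    coeff_smul]
  rcases lt_or_ge n B with h | h
  · rw [hf n h]
  · rw [hB n h, smul_zero, smul_zero]

theorem orderTop_heval_pos (hx : 0 < x.orderTop) {f : PowerSeries R} (hf : constantCoeff f = 0) :
    0 < (heval x f).orderTop := by
  obtain ⟨f', rfl⟩ := X_dvd_iff.mpr hf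
  have hf' : 0 ≤ (heval x f').orderTop := by
    refine le_orderTop_iff_forall.mpr fun j hj ↦ ?_
    have hpow (n : ℕ) : (x ^ n).coeff j = 0 := coeff_eq_zero_of_lt_orderTop <|
      hj.trans_le <| (nsmul_nonneg hx.le n).trans orderTop_nsmul_le_orderTop_pow
    rw [coeff_heval_eq_of_coeff_eq hx (B := 0) (fun n _ ↦ hpow n) (f₂ := 0) (by simp), map_zero,
      coeff_zero]
  rw [map_mul, heval_X x hx]
  exact (add_pos_of_pos_of_nonneg hx hf').trans_le orderTop_add_le_mul

theorem heval_coe (hx : 0 < x.orderTop) (p : Polynomial R) :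
    heval x (p : PowerSeries R) = Polynomial.aeval x p := by
  induction p using Polynomial.induction_on' with
  | add p q hp hq => rw [Polynomial.coe_add, map_add, hp, hq, map_add]
  | monomial n a =>
    rw [Polynomial.coe_monomial, monomial_eq_C_mul_X_pow, map_mul, map_pow, heval_C,
      heval_X x hx, Polynomial.aeval_monomial, Algebra.algebraMap_eq_smul_one, smul_mul_assoc,
      one_mul]

theorem heval_subst (hx : 0 < x.orderTop) {f g : PowerSeries R} (hg : constantCoeff g = 0) :
    heval x (f.subst g) = heval (heval x g) f := by
  have hs := HasSubst.of_constantCoeff_zero' hg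
  have hy := orderTop_heval_pos hx hg
  ext γ
  obtain ⟨B, hB⟩ := exists_coeff_pow_eq_zero hx γ
  have hBy (n : ℕ) (hn : B ≤ n) : (heval x g ^ n).coeff γ = 0 := by
    rw [← map_pow, coeff_heval_eq_of_coeff_eq hx hB (f₂ := 0), map_zero, coeff_zero]
    intro m hm
    rw [coeff_pow_eq_zero_of_lt hg (hm.trans_le hn), map_zero]
  calc (heval x (f.subst g)).coeff γ
      = (heval x ((trunc B f : PowerSeries R).subst g)).coeff γ :=
        coeff_heval_eq_of_coeff_eq hx hB fun n hn ↦ (coeff_subst_coe_trunc_of_lt hg f hn).symm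
    _ = (heval (heval x g) (trunc B f : PowerSeries R)).coeff γ := by
        rw [subst_coe hs, heval_coe hy, ← Polynomial.aeval_algHom_apply]
    _ = (heval (heval x g) f).coeff γ :=
        coeff_heval_eq_of_coeff_eq hy hBy fun n hn ↦ coeff_coe_trunc_of_lt hn

theorem smul_powerSeriesFamily_apply (hx : 0 < x.orderTop) (f : PowerSeries R) (n : ℕ) :
    (x • powerSeriesFamily x f) n = PowerSeries.coeff n f • x ^ (n + 1) := by
  rw [SummableFamily.smul_apply, of_symm_smul_of_eq_mul, powerSeriesFamily_of_orderTop_pos hx,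
    mul_smul_comm, pow_succ']

variable [Algebra ℚ R]

/- Only meaningful for `0 < x.orderTop`, resp. `0 < (x - 1).orderTop`: otherwise `heval` evaluates
at `0`, so that `exp x = 1` and `log x = 0`. -/
noncomputable def exp (x : R⟦Γ⟧) : R⟦Γ⟧ := heval x (PowerSeries.exp R)

noncomputable def log (x : R⟦Γ⟧) : R⟦Γ⟧ := heval (x - 1) (PowerSeries.log R)

theorem log_one_add (hx : 0 < x.orderTop) :
    log (1 + x) = (x • powerSeriesFamily x
      (PowerSeries.mk fun m ↦ PowerSeries.coeff (m + 1) (PowerSeries.log R))).hsum := by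
  rw [log, add_sub_cancel_left, hsum_smul, ← heval_apply]
  conv_lhs => rw [eq_X_mul_shift_add_const (PowerSeries.log R)]
  rw [map_add, map_mul, heval_X x hx, constantCoeff_log, map_zero, map_zero, add_zero]

theorem exp_add (hx : 0 < x.orderTop) (hy : 0 < y.orderTop) : exp (x + y) = exp x * exp y := by
  have hxy : 0 < (x + y).orderTop := (lt_min hx hy).trans_le min_orderTop_le_orderTop_add
  rw [exp, exp, exp, heval_apply, heval_apply, heval_apply, ← hsum_mul]
  refine hsum_eq_of_apply_eq_sum_antidiagonal fun n ↦ ?_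
  rw [powerSeriesFamily_of_orderTop_pos hxy, (Commute.all x y).add_pow', smul_sum]
  refine sum_congr rfl fun p hp ↦ ?_
  obtain rfl := HasAntidiagonal.mem_antidiagonal.mp hp
  rw [mul_toFun, powerSeriesFamily_of_orderTop_pos hx, powerSeriesFamily_of_orderTop_pos hy,
    coeff_exp, coeff_exp, coeff_exp, smul_mul_smul_comm, ← map_mul, algebraMap_smul,
    algebraMap_smul, ← Nat.cast_smul_eq_nsmul ℚ, smul_smul, Nat.cast_add_choose]
  congr 1
  field_simp

theorem orderTop_exp_sub_one_pos (hx : 0 < x.orderTop) : 0 < (exp x - 1).orderTop := by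
  rw [exp, ← map_one (heval x), ← map_sub]
  exact orderTop_heval_pos hx (by simp [constantCoeff_exp])

theorem orderTop_log_one_add_pos (hx : 0 < x.orderTop) : 0 < (log (1 + x)).orderTop := by
  rw [log, add_sub_cancel_left]
  exact orderTop_heval_pos hx constantCoeff_log

theorem log_exp (hx : 0 < x.orderTop) : log (exp x) = x := by
  rw [log, exp, ← map_one (heval x), ← map_sub,
    ← heval_subst hx (by simp [constantCoeff_exp]), log_subst_exp_sub_one, heval_X x hx]

theorem exp_log_one_add (hx : 0 < x.orderTop) : exp (log (1 + x)) = 1 + x := by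
  rw [exp, log, add_sub_cancel_left, ← heval_subst hx constantCoeff_log, exp_subst_log, map_add,
    map_one, heval_X x hx]

end HahnSeries

/-- In the Hahn series field k((G)) over an ordered field k (so char k = 0), with
μ the set of series of strictly positive valuation (the infinitesimals), the map
E₀ : μ → 1 + μ, E₀(ε) = Σ_{n≥0} εⁿ/n!, is a bijection from μ onto 1 + μ satisfying
E₀(x+y) = E₀(x)·E₀(y), with inverse l(1+ε) = Σ_{n≥1} (-1)^{n+1} εⁿ/n. -/
theorem stmt7 {k G : Type*} [Field k] [LinearOrder k] [IsStrictOrderedRing k]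
    [AddCommGroup G] [LinearOrder G] [IsOrderedAddMonoid G] :
    ∃ E L : HahnSeries G k → HahnSeries G k,
      (∀ ε ∈ {f : HahnSeries G k | f = 0 ∨ 0 < f.order},
        ∃ S : HahnSeries.SummableFamily G k ℕ,
          (∀ n : ℕ, S n = ((n.factorial : k)⁻¹) • ε ^ n) ∧ E ε = S.hsum) ∧
      (∀ ε ∈ {f : HahnSeries G k | f = 0 ∨ 0 < f.order},
        ∃ S : HahnSeries.SummableFamily G k ℕ,
          (∀ m : ℕ, S m = (((-1 : k) ^ m / ((m : k) + 1)) • ε ^ (m + 1))) ∧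
            L (1 + ε) = S.hsum) ∧
      (∀ x ∈ {f : HahnSeries G k | f = 0 ∨ 0 < f.order},
        ∀ y ∈ {f : HahnSeries G k | f = 0 ∨ 0 < f.order}, E (x + y) = E x * E y) ∧
      Set.BijOn E {f : HahnSeries G k | f = 0 ∨ 0 < f.order}
        ((fun f => 1 + f) '' {f : HahnSeries G k | f = 0 ∨ 0 < f.order}) ∧
      (∀ ε ∈ {f : HahnSeries G k | f = 0 ∨ 0 < f.order},
        L (E ε) = ε ∧ E (L (1 + ε)) = 1 + ε) := by
  simp_rw [← HahnSeries.zero_lt_orderTop_iff_eq_zero_or]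
  refine ⟨HahnSeries.exp, HahnSeries.log, fun ε hε ↦ ⟨_, fun n ↦ ?_, rfl⟩,
    fun ε hε ↦ ⟨_, fun m ↦ ?_, HahnSeries.log_one_add hε⟩,
    fun x hx y hy ↦ HahnSeries.exp_add hx hy, ?_,
    fun ε hε ↦ ⟨HahnSeries.log_exp hε, HahnSeries.exp_log_one_add hε⟩⟩
  · simp [HahnSeries.SummableFamily.powerSeriesFamily_of_orderTop_pos hε, PowerSeries.coeff_exp]
  · simp [HahnSeries.smul_powerSeriesFamily_apply hε, pow_succ]
  refine Set.InvOn.bijOn ⟨fun ε hε ↦ HahnSeries.log_exp hε, ?_⟩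
    (fun ε hε ↦ ⟨_, HahnSeries.orderTop_exp_sub_one_pos hε, add_sub_cancel _ _⟩) ?_
  · rintro _ ⟨ε, hε, rfl⟩
    exact HahnSeries.exp_log_one_add hε
  · rintro _ ⟨ε, hε, rfl⟩
    exact HahnSeries.orderTop_log_one_add_pos hε
end

section
/- Let M ⊆ N be models of PA with M an initial segment of N (elementary end extension), and let v denote the standard valuation on the real closures R(M) ⊆ R(N). Then the value group v(R(M)^×) is a convex subgroup of v(R(N)^×). -/
open FirstOrder Language

/-- A real closed ordered field: every nonnegative element is a square and every
polynomial of odd degree has a root. -/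
def IsRealClosedOrd (K : Type*) [Field K] [LinearOrder K] [IsStrictOrderedRing K] : Prop :=
  (∀ x : K, 0 ≤ x → ∃ y : K, y ^ 2 = x) ∧
    ∀ p : Polynomial K, Odd p.natDegree → ∃ x : K, p.eval x = 0

/-- The first-order language of ordered rings. -/
abbrev ordRingLang : FirstOrder.Language := Language.ring.sum Language.order

noncomputable instance ordRingStruct1 (M : Type*) [CommRing M] [LinearOrder M] [IsStrictOrderedRing M] :
    Language.ring.Structure M := (FirstOrder.Ring.compatibleRingOfRing M).toStructure

noncomputable instance ordRingStruct2 (M : Type*) [LE M] : Language.order.Structure M :=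
  orderStructure M

/-- `M` is (the ring of differences of) a model of PA: a discretely linearly ordered
commutative ring satisfying the first-order induction scheme on its nonnegative part for
all formulas in the language of ordered rings (with parameters). -/
def ModelOfPA (M : Type*) [CommRing M] [LinearOrder M] [IsStrictOrderedRing M] : Prop :=
  (∀ x : M, ¬(0 < x ∧ x < 1)) ∧
  ∀ (n : ℕ) (φ : ordRingLang.Formula (Fin (n + 1))) (p : Fin n → M),
    φ.Realize (Fin.cons 0 p) →
    (∀ x : M, 0 ≤ x → φ.Realize (Fin.cons x p) → φ.Realize (Fin.cons (x + 1) p)) →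
    ∀ x : M, 0 ≤ x → φ.Realize (Fin.cons x p)

/-- A subset of `M` definable (with parameters) in the language of ordered rings. -/
def DefinableSet {M : Type*} [CommRing M] [LinearOrder M] [IsStrictOrderedRing M] (A : Set M) : Prop :=
  ∃ (n : ℕ) (φ : ordRingLang.Formula (Fin (n + 1))) (p : Fin n → M),
    ∀ x : M, x ∈ A ↔ φ.Realize (Fin.cons x p)

/-- `N` is an elementary end extension of `M` (as subrings of an ambient ordered field):
`M` is an initial segment of `N` and the inclusion preserves all first-order formulas of
the language of ordered rings. -/
def ElemEndExt {K : Type*} [Field K] [LinearOrder K] [IsStrictOrderedRing K] (M N : Subring K) (h : M ≤ N) : Prop :=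
  (∀ x ∈ N, ∀ m ∈ M, 0 ≤ x → x ≤ m → x ∈ M) ∧
  ∀ (n : ℕ) (φ : ordRingLang.Formula (Fin n)) (p : Fin n → M),
    φ.Realize p ↔ φ.Realize (fun i => Subring.inclusion h (p i))

/-!
Elements algebraic over `M` form a field. For convexity, a root of a polynomial over the discrete
ring `M` is bounded by an element of `M` (Cauchy's bound), so `v x ≤ v z ≤ v y` gives `a, b ∈ M`
with `|z| ≤ a` and `|z⁻¹| ≤ b`. Then `1 ≤ |z b| ≤ a b`, and the integer part `w ∈ N` of `|z b|`
lies in `M` because `M` is an initial segment of `N`; since `w ≤ |z b| < w + 1 ≤ 2 w`, the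
element `w / b` of `R(M)` has the value of `z`.
-/

open Polynomial

section OrderedField

variable {K : Type*} [Field K] [LinearOrder K] [IsStrictOrderedRing K]

theorem abs_le_one_add_sum_abs_coeff_of_isRoot {p : K[X]} {x : K} (hlc : 1 ≤ |p.leadingCoeff|)
    (hx : p.IsRoot x) : |x| ≤ 1 + ∑ i ∈ Finset.range p.natDegree, |p.coeff i| := by
  set d := p.natDegree
  set S := ∑ i ∈ Finset.range d, |p.coeff i|
  by_contra! hlt
  have hx1 : 1 ≤ |x| := by
    linarith [Finset.sum_nonneg fun i (_ : i ∈ Finset.range d) => abs_nonneg (p.coeff i)]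
  have hlead : p.coeff d * x ^ d = -∑ i ∈ Finset.range d, p.coeff i * x ^ i := by
    have h := hx.eq_zero
    rw [eval_eq_sum_range, Finset.sum_range_succ] at h
    linear_combination h
  have hlow : |x| ^ d ≤ ∑ i ∈ Finset.range d, |p.coeff i| * |x| ^ i :=
    calc |x| ^ d ≤ |p.coeff d| * |x| ^ d := le_mul_of_one_le_left (by positivity) hlc
      _ = |∑ i ∈ Finset.range d, p.coeff i * x ^ i| := by rw [← abs_pow, ← abs_mul, hlead, abs_neg]
      _ ≤ ∑ i ∈ Finset.range d, |p.coeff i * x ^ i| := Finset.abs_sum_le_sum_abs _ _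
      _ = ∑ i ∈ Finset.range d, |p.coeff i| * |x| ^ i := by simp only [abs_mul, abs_pow]
  have hup : |x| * ∑ i ∈ Finset.range d, |p.coeff i| * |x| ^ i ≤ S * |x| ^ d := by
    rw [Finset.mul_sum, Finset.sum_mul]
    refine Finset.sum_le_sum fun i hi => ?_
    calc |x| * (|p.coeff i| * |x| ^ i) = |p.coeff i| * |x| ^ (i + 1) := by ring
      _ ≤ |p.coeff i| * |x| ^ d := by
          gcongr
          exact Finset.mem_range.1 hi
  have hxS : |x| * |x| ^ d ≤ S * |x| ^ d :=
    (mul_le_mul_of_nonneg_left hlow (abs_nonneg x)).trans hup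
  linarith [le_of_mul_le_mul_right hxS (by positivity)]

theorem vle_inv_inv_iff {x y : K} : vle x⁻¹ y⁻¹ ↔ vle y x := by
  rw [vle, vle, inv_div_inv]

theorem veq_div_iff_veq_mul {w b z : K} : veq (w / b) z ↔ veq w (z * b) := by
  rw [veq, veq, vle, vle, vle, vle, div_div_eq_mul_div, div_div, mul_comm b z]

theorem veq_of_le_abs_of_abs_lt_add_one {w z : K} (hw : 1 ≤ w) (hwz : w ≤ |z|)
    (hzw : |z| < w + 1) : veq w z := by
  have hw0 : 0 < w := zero_lt_one.trans_le hw
  refine ⟨⟨2, ?_⟩, ⟨1, ?_⟩⟩ <;> rw [abs_div, abs_of_pos hw0]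
  · rw [div_le_iff₀ hw0]
    push_cast
    linarith
  · rw [Nat.cast_one, div_le_one (hw0.trans_le hwz)]
    exact hwz

theorem exists_mem_abs_le_of_vle {M : Subring K} {x z : K} (hx : x ≠ 0) (hxz : vle x z)
    (hbound : ∃ a ∈ M, |x| ≤ a) : ∃ c ∈ M, |z| ≤ c := by
  obtain ⟨k, hk⟩ := hxz
  obtain ⟨a, ha, hxa⟩ := hbound
  refine ⟨k * a, mul_mem (natCast_mem M k) ha, ?_⟩
  calc |z| = |z / x| * |x| := by rw [abs_div, div_mul_cancel₀ _ (abs_ne_zero.2 hx)]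
    _ ≤ k * a := mul_le_mul hk hxa (abs_nonneg x) k.cast_nonneg

namespace AlgebraicOver

variable {M : Subring K} {x y : K}

theorem iff_isAlgebraic : AlgebraicOver M x ↔ IsAlgebraic M x := by
  have hrange : Set.range (algebraMap M K) = M := Subtype.range_coe
  constructor
  · rintro ⟨p, hp0, hpc, hpx⟩
    obtain ⟨q, rfl⟩ : p ∈ lifts (algebraMap M K) :=
      (lifts_iff_coeff_lifts p).2 fun n => hrange ▸ hpc n
    exact ⟨q, fun hq => hp0 (by rw [hq, map_zero]), by rwa [aeval_def, ← eval_map]⟩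
  · rintro ⟨q, hq0, hqx⟩
    refine ⟨q.map (algebraMap M K), (Polynomial.map_ne_zero_iff Subtype.coe_injective).2 hq0,
      fun n => ?_, by rwa [eval_map, ← aeval_def]⟩
    rw [coeff_map]
    exact (q.coeff n).2

theorem of_mem (hx : x ∈ M) : AlgebraicOver M x :=
  iff_isAlgebraic.2 (isAlgebraic_algebraMap (⟨x, hx⟩ : M))

theorem mul (hx : AlgebraicOver M x) (hy : AlgebraicOver M y) : AlgebraicOver M (x * y) :=
  iff_isAlgebraic.2 ((iff_isAlgebraic.1 hx).mul (iff_isAlgebraic.1 hy))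

theorem inv (hx : AlgebraicOver M x) : AlgebraicOver M x⁻¹ :=
  iff_isAlgebraic.2 (iff_isAlgebraic.1 hx).inv

theorem exists_mem_abs_le (hM : ∀ m ∈ M, ¬(0 < m ∧ m < 1)) (hx : AlgebraicOver M x) :
    ∃ c ∈ M, |x| ≤ c := by
  obtain ⟨p, hp0, hpc, hpx⟩ := hx
  have abs_mem : ∀ i, |p.coeff i| ∈ M := fun i => by
    rcases abs_choice (p.coeff i) with h | h <;> rw [h]
    exacts [hpc i, neg_mem (hpc i)]
  have hlc : 1 ≤ |p.leadingCoeff| :=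
    not_lt.1 fun h => hM _ (abs_mem _) ⟨abs_pos.2 (leadingCoeff_ne_zero.2 hp0), h⟩
  exact ⟨_, add_mem (one_mem M) (sum_mem fun i _ => abs_mem i),
    abs_le_one_add_sum_abs_coeff_of_isRoot hlc hpx⟩

end AlgebraicOver

theorem exists_mem_veq_of_one_le_abs {M N : Subring K} (hN : IsIntegerPart N)
    (hseg : ∀ x ∈ N, ∀ m ∈ M, 0 ≤ x → x ≤ m → x ∈ M) {z c : K} (hz : 1 ≤ |z|) (hc : c ∈ M)
    (hzc : |z| ≤ c) : ∃ w ∈ M, w ≠ 0 ∧ veq w z := by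
  obtain ⟨w, hwN, hwz, hzw⟩ := hN.2 |z|
  have hw1 : 1 ≤ w := not_lt.1 fun h => hN.1 w hwN ⟨by linarith, h⟩
  exact ⟨w, hseg w hwN c hc (by linarith) (hwz.trans hzc), by positivity,
    veq_of_le_abs_of_abs_lt_add_one hw1 hwz hzw⟩

theorem exists_algebraicOver_veq {M N : Subring K} (hN : IsIntegerPart N)
    (hseg : ∀ x ∈ N, ∀ m ∈ M, 0 ≤ x → x ≤ m → x ∈ M) {z a b : K} (hz : z ≠ 0) (ha : a ∈ M)
    (hza : |z| ≤ a) (hb : b ∈ M) (hzb : |z⁻¹| ≤ b) :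
    ∃ w : K, AlgebraicOver M w ∧ w ≠ 0 ∧ veq w z := by
  have hb0 : 0 < b := (abs_pos.2 (inv_ne_zero hz)).trans_le hzb
  have habs : |z * b| = |z| * b := by rw [abs_mul, abs_of_pos hb0]
  have hone : 1 ≤ |z * b| :=
    calc 1 = |z| * |z⁻¹| := by rw [← abs_mul, mul_inv_cancel₀ hz, abs_one]
      _ ≤ |z * b| := by rw [habs]; gcongr
  have hle : |z * b| ≤ a * b := by rw [habs]; gcongr
  obtain ⟨w, hw, hw0, hwz⟩ := exists_mem_veq_of_one_le_abs hN hseg hone (mul_mem ha hb) hle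
  refine ⟨w / b, ?_, div_ne_zero hw0 hb0.ne', veq_div_iff_veq_mul.2 hwz⟩
  rw [div_eq_mul_inv]
  exact (AlgebraicOver.of_mem hw).mul (AlgebraicOver.of_mem hb).inv

end OrderedField

theorem stmt10_general {K : Type*} [Field K] [LinearOrder K] [IsStrictOrderedRing K]
    (N : Subring K) (hNint : IsIntegerPart N)
    (M : Subring K) (hMN : M ≤ N)
    (hee : ElemEndExt M N hMN) :
    (∀ x y : K, AlgebraicOver M x → AlgebraicOver M y →
      AlgebraicOver M (x * y) ∧ (x ≠ 0 → AlgebraicOver M x⁻¹)) ∧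
    ∀ x y z : K, AlgebraicOver M x → AlgebraicOver M y →
      x ≠ 0 → y ≠ 0 → z ≠ 0 → vle x z → vle z y →
      ∃ w : K, AlgebraicOver M w ∧ w ≠ 0 ∧ veq w z := by
  have hM : ∀ m ∈ M, ¬(0 < m ∧ m < 1) := fun m hm => hNint.1 m (hMN hm)
  refine ⟨fun x y hx hy => ⟨hx.mul hy, fun _ => hx.inv⟩, ?_⟩
  intro x y z hx hy hx0 hy0 hz0 hxz hzy
  obtain ⟨a, ha, hza⟩ := exists_mem_abs_le_of_vle hx0 hxz (hx.exists_mem_abs_le hM)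
  obtain ⟨b, hb, hzb⟩ := exists_mem_abs_le_of_vle (inv_ne_zero hy0)
    (vle_inv_inv_iff.2 hzy) (hy.inv.exists_mem_abs_le hM)
  exact exists_algebraicOver_veq hNint hee.1 hz0 ha hza hb hzb

/-- If M ⊆ N are models of PA with N an elementary end extension of M, and
K = R(N) is the real closure of N (with R(M) = the set of elements of K algebraic
over M), then the value group v(R(M)ˣ) is a convex subgroup of v(R(N)ˣ) under the
standard valuation: it is closed under products and inverses, and any value of a
nonzero element of K lying between two values of nonzero elements of R(M) is itself
the value of a nonzero element of R(M). -/
theorem stmt10 {K : Type*} [Field K] [LinearOrder K] [IsStrictOrderedRing K] (hK : IsRealClosedOrd K)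
    (N : Subring K) (hNPA : ModelOfPA N) (hNint : IsIntegerPart N)
    (halg : ∀ x : K, AlgebraicOver N x)
    (M : Subring K) (hMN : M ≤ N) (hMPA : ModelOfPA M)
    (hee : ElemEndExt M N hMN) :
    (∀ x y : K, AlgebraicOver M x → AlgebraicOver M y →
      AlgebraicOver M (x * y) ∧ (x ≠ 0 → AlgebraicOver M x⁻¹)) ∧
    ∀ x y z : K, AlgebraicOver M x → AlgebraicOver M y →
      x ≠ 0 → y ≠ 0 → z ≠ 0 → vle x z → vle z y →
      ∃ w : K, AlgebraicOver M w ∧ w ≠ 0 ∧ veq w z :=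
  stmt10_general N hNint M hMN hee
end
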